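/- arXiv:1002.3290 — 2 statements merged into one kernel-verified Lean document; each statement's English description precedes it below -/
import Mathlib

section
/- Let E₀, E be Polish spaces, K ⊆ E₀ compact, and suppose (ζ, q) ↦ I_ζ via I_ζ(φ) = inf{L(q) : q ∈ S, φ = G⁰(ζ, q)} where S is a topological space, L : S → [0, ∞] has compact sublevel sets {L ≤ M}, and G⁰ : E₀ × S → E is continuous on K × {L ≤ M} for each M. If ζ ↦ I_ζ(φ) is lower semicontinuous for each φ ∈ E, then for every M < ∞ the set ⋃_{ζ ∈ K} {φ : I_ζ(φ) ≤ M} is closed and contained in the compact set G⁰(K × {L ≤ M + 1}), hence compact. -/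
open Set ENNReal

/-!
Write `I = rateFunction G L`. If `I ζ φ ≤ M < r`, some `q` with `G (ζ, q) = φ` has `L q ≤ r`, so
the union `A` of the `M`-sublevel sets over `ζ ∈ K` lies in the compact image
`C r = G '' (K ×ˢ {L ≤ r})` for every `r > M`. Conversely, if `φ ∈ C r` for all `r > M`, then
`inf_{ζ ∈ K} I ζ φ ≤ M`, and this infimum is attained because `ζ ↦ I ζ φ` is lower semicontinuous
and `K` is compact. Hence `A = ⋂_{r > M} C r` is closed, and compact as a closed subset of `C (M + 1)`.
-/

theorem ENNReal.le_ofReal_of_forall_lt {a : ℝ≥0∞} {M : ℝ}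
    (h : ∀ r, M < r → a ≤ ENNReal.ofReal r) : a ≤ ENNReal.ofReal M :=
  ge_of_tendsto ((ENNReal.continuous_ofReal.tendsto M).mono_left nhdsWithin_le_nhds)
    (eventually_nhdsWithin_of_forall (s := Ioi M) h)

theorem IsCompact.exists_le_ofReal_of_forall_lt {X : Type*} [TopologicalSpace X] {K : Set X}
    {f : X → ℝ≥0∞} (hK : IsCompact K) (hf : LowerSemicontinuousOn f K) {M : ℝ}
    (h : ∀ r, M < r → ∃ x ∈ K, f x ≤ ENNReal.ofReal r) : ∃ x ∈ K, f x ≤ ENNReal.ofReal M := by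
  obtain ⟨x, hxK, -⟩ := h (M + 1) (lt_add_one M)
  obtain ⟨x₀, hx₀K, hmin⟩ := hf.exists_isMinOn ⟨x, hxK⟩ hK
  refine ⟨x₀, hx₀K, ENNReal.le_ofReal_of_forall_lt fun r hr => ?_⟩
  obtain ⟨x, hxK, hx⟩ := h r hr
  exact (hmin hxK).trans hx

section RateFunction

variable {X Y S : Type*}

noncomputable def rateFunction (G : X × S → Y) (L : S → ℝ≥0∞) (ζ : X) (φ : Y) : ℝ≥0∞ :=
  ⨅ q ∈ {q : S | G (ζ, q) = φ}, L q

variable {G : X × S → Y} {L : S → ℝ≥0∞} {K : Set X}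

theorem rateFunction_le {ζ : X} {φ : Y} {q : S} (h : G (ζ, q) = φ) :
    rateFunction G L ζ φ ≤ L q :=
  iInf₂_le q h

theorem exists_of_rateFunction_lt {ζ : X} {φ : Y} {b : ℝ≥0∞} (h : rateFunction G L ζ φ < b) :
    ∃ q, G (ζ, q) = φ ∧ L q < b := by
  simpa only [rateFunction, iInf_lt_iff, exists_prop, mem_ofPred_eq] using h

theorem biUnion_rateFunction_le_subset_image {a b : ℝ≥0∞} (hab : a < b) :
    ⋃ ζ ∈ K, {φ | rateFunction G L ζ φ ≤ a} ⊆ G '' (K ×ˢ {q | L q ≤ b}) := by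
  simp only [iUnion_subset_iff]
  intro ζ hζ φ hφ
  obtain ⟨q, hGq, hLq⟩ := exists_of_rateFunction_lt (hφ.trans_lt hab)
  exact ⟨(ζ, q), ⟨hζ, hLq.le⟩, hGq⟩

theorem biUnion_rateFunction_le_ofReal_eq_iInter [TopologicalSpace X] (hK : IsCompact K)
    (hlsc : ∀ φ, LowerSemicontinuous fun ζ => rateFunction G L ζ φ) {M : ℝ} (hM : 0 ≤ M) :
    ⋃ ζ ∈ K, {φ | rateFunction G L ζ φ ≤ ENNReal.ofReal M} =
      ⋂ r ∈ Ioi M, G '' (K ×ˢ {q | L q ≤ ENNReal.ofReal r}) := by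
  refine Subset.antisymm (subset_iInter₂ fun r hr => biUnion_rateFunction_le_subset_image
    ((ENNReal.ofReal_lt_ofReal_iff_of_nonneg hM).2 hr)) fun φ hφ => ?_
  have hφK : ∀ r, M < r → ∃ ζ ∈ K, rateFunction G L ζ φ ≤ ENNReal.ofReal r := by
    intro r hr
    obtain ⟨⟨ζ, q⟩, ⟨hζ, hq⟩, hGq⟩ := mem_iInter₂.1 hφ r hr
    exact ⟨ζ, hζ, (rateFunction_le hGq).trans hq⟩
  simpa only [mem_iUnion₂, exists_prop, mem_ofPred_eq] using
    hK.exists_le_ofReal_of_forall_lt ((hlsc φ).lowerSemicontinuousOn K) hφK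

end RateFunction

/-- Uniform compact level sets for the rate function I_ζ(φ) = inf{L(q) : G⁰(ζ,q) = φ}:
if L has compact sublevel sets, G⁰ is continuous on K × {L ≤ M} and ζ ↦ I_ζ(φ) is
lower semicontinuous, then ⋃_{ζ∈K}{I_ζ ≤ M} is closed, contained in the compact set
G⁰(K × {L ≤ M+1}), and hence compact. -/
theorem stmt_10 {E₀ E S : Type*} [MetricSpace E₀] [MetricSpace E] [TopologicalSpace S]
    (K : Set E₀) (hK : IsCompact K)
    (L : S → ℝ≥0∞) (hL : ∀ M : ℝ, IsCompact {q : S | L q ≤ ENNReal.ofReal M})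
    (G0 : E₀ × S → E)
    (hG : ∀ M : ℝ, ContinuousOn G0 (K ×ˢ {q : S | L q ≤ ENNReal.ofReal M}))
    (I : E₀ → E → ℝ≥0∞)
    (hI : ∀ ζ φ, I ζ φ = ⨅ q ∈ {q : S | G0 (ζ, q) = φ}, L q)
    (hlsc : ∀ φ : E, LowerSemicontinuous (fun ζ => I ζ φ))
    (M : ℝ) (hM : 0 ≤ M) :
    IsClosed (⋃ ζ ∈ K, {φ : E | I ζ φ ≤ ENNReal.ofReal M}) ∧
    (⋃ ζ ∈ K, {φ : E | I ζ φ ≤ ENNReal.ofReal M})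
      ⊆ G0 '' (K ×ˢ {q : S | L q ≤ ENNReal.ofReal (M + 1)}) ∧
    IsCompact (⋃ ζ ∈ K, {φ : E | I ζ φ ≤ ENNReal.ofReal M}) := by
  obtain rfl : I = rateFunction G0 L := funext₂ hI
  have himage_compact (r : ℝ) : IsCompact (G0 '' (K ×ˢ {q | L q ≤ ENNReal.ofReal r})) :=
    (hK.prod (hL r)).image_of_continuousOn (hG r)
  have hclosed : IsClosed (⋃ ζ ∈ K, {φ | rateFunction G0 L ζ φ ≤ ENNReal.ofReal M}) := by
    rw [biUnion_rateFunction_le_ofReal_eq_iInter hK hlsc hM]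
    exact isClosed_biInter fun r _ => (himage_compact r).isClosed
  have hsub := biUnion_rateFunction_le_subset_image (G := G0) (L := L) (K := K)
    ((ENNReal.ofReal_lt_ofReal_iff_of_nonneg hM).2 (lt_add_one M))
  exact ⟨hclosed, hsub, (himage_compact (M + 1)).of_isClosed_subset hclosed hsub⟩
end

section
/- Let E be a Polish space, (Z^ε) a family of E-valued random variables, F : E → ℝ bounded continuous, and I : E → [0, ∞] given by I(φ) = inf{L(q) : q ∈ S_φ}. Suppose for each δ > 0 there exists q = (f, g) with φ₀ = G⁰(q), L(q) ≤ I(φ₀) + δ, and a variational upper bound −ε log E[e^{−F(Z^ε)/ε}] ≤ L(q) + E[F(G^ε(q_ε))] where G^ε(q_ε) ⇒ G⁰(q) as ε → 0. Then limsup_{ε→0} −ε log E[e^{−F(Z^ε)/ε}] ≤ inf_{φ∈E} (I(φ) + F(φ)). -/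
open Filter Topology MeasureTheory ENNReal

namespace EReal

lemma le_of_forall_pos_le_add_coe {x y : EReal} (h : ∀ δ : ℝ, 0 < δ → x ≤ y + δ) : x ≤ y := by
  induction y using EReal.rec with
  | bot => simpa using h 1 one_pos
  | top => exact le_top
  | coe y =>
    refine EReal.le_of_forall_lt_iff_le.mp fun z hz => ?_
    have hyz : (0 : ℝ) < z - y := by linarith [EReal.coe_lt_coe_iff.mp hz]
    simpa [← EReal.coe_sub, ← EReal.coe_add] using h (z - y) hyz

lemma tendsto_const_add_coe {α : Type*} {l : Filter α} (c : EReal) {A : α → ℝ} {a : ℝ}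
    (hA : Tendsto A l (𝓝 a)) : Tendsto (fun x => c + (A x : EReal)) l (𝓝 (c + a)) :=
  (EReal.continuousAt_add (p := (c, (a : EReal))) (.inr (coe_ne_bot a))
      (.inr (coe_ne_top a))).tendsto.comp
    (tendsto_const_nhds.prodMk_nhds ((continuous_coe_real_ereal.tendsto a).comp hA))

lemma limsup_le_add_of_eventually_le_add {α : Type*} {l : Filter α} [l.NeBot] {f : α → EReal}
    {c : EReal} {A : α → ℝ} {a : ℝ} (hf : ∀ᶠ x in l, f x ≤ c + A x) (hA : Tendsto A l (𝓝 a)) :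
    limsup f l ≤ c + a :=
  (limsup_le_limsup hf).trans (tendsto_const_add_coe c hA).limsup_eq.le

end EReal

theorem stmt_16_general {E S : Type*}
    (F : E → ℝ)
    (G0 : S → E) (L : S → ℝ≥0∞)
    (I : E → ℝ≥0∞)
    (V : ℝ → ℝ)
    (hub : ∀ φ₀ : E, ∀ δ > 0, ∃ q : S, G0 q = φ₀ ∧ L q ≤ I φ₀ + ENNReal.ofReal δ ∧
      ∃ A : ℝ → ℝ,
        (∀ᶠ ε in 𝓝[>] (0:ℝ), (V ε : EReal) ≤ (L q : EReal) + (A ε : EReal)) ∧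
        Tendsto A (𝓝[>] (0:ℝ)) (𝓝 (F φ₀))) :
    limsup (fun ε => (V ε : EReal)) (𝓝[>] (0:ℝ))
      ≤ ⨅ φ : E, ((I φ : EReal) + (F φ : EReal)) := by
  refine le_iInf fun φ => EReal.le_of_forall_pos_le_add_coe fun δ hδ => ?_
  obtain ⟨q, -, hLq, A, hVA, hA⟩ := hub φ δ hδ
  have hLq' : (L q : EReal) ≤ (I φ : EReal) + δ := by
    simpa [EReal.coe_ennreal_add, EReal.coe_ennreal_ofReal, hδ.le] using
      EReal.coe_ennreal_le_coe_ennreal_iff.mpr hLq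
  calc limsup (fun ε => (V ε : EReal)) (𝓝[>] (0:ℝ))
      ≤ (L q : EReal) + F φ := EReal.limsup_le_add_of_eventually_le_add hVA hA
    _ ≤ (I φ : EReal) + δ + F φ := by gcongr
    _ = (I φ : EReal) + F φ + δ := add_right_comm _ _ _

/-- Laplace-principle upper bound: if for each φ₀ and δ > 0 there is a near-optimal
control q with G⁰(q) = φ₀, L(q) ≤ I(φ₀) + δ, and the variational bound
−ε log E[e^{−F(Z^ε)/ε}] ≤ L(q) + E[F(G^ε(q_ε))] with E[F(G^ε(q_ε))] → F(φ₀)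
(by weak convergence G^ε(q_ε) ⇒ G⁰(q)), then
limsup_{ε→0} −ε log E[e^{−F(Z^ε)/ε}] ≤ inf_φ (I(φ) + F(φ)). -/
theorem stmt_16 {E S : Type*} [MetricSpace E] [MeasurableSpace E] [BorelSpace E]
    (μ : ℝ → Measure E) (hμ : ∀ ε > 0, IsProbabilityMeasure (μ ε))
    (F : E → ℝ) (hFc : Continuous F) (hFb : ∃ C, ∀ x, |F x| ≤ C)
    (G0 : S → E) (L : S → ℝ≥0∞)
    (I : E → ℝ≥0∞) (hI : ∀ φ, I φ = ⨅ q ∈ {q : S | G0 q = φ}, L q)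
    (V : ℝ → ℝ)
    (hV : ∀ ε > 0, V ε = -ε * Real.log (∫ x, Real.exp (-(F x) / ε) ∂(μ ε)))
    (hub : ∀ φ₀ : E, ∀ δ > 0, ∃ q : S, G0 q = φ₀ ∧ L q ≤ I φ₀ + ENNReal.ofReal δ ∧
      ∃ A : ℝ → ℝ,
        (∀ᶠ ε in 𝓝[>] (0:ℝ), (V ε : EReal) ≤ (L q : EReal) + (A ε : EReal)) ∧
        Tendsto A (𝓝[>] (0:ℝ)) (𝓝 (F φ₀))) :
    limsup (fun ε => (V ε : EReal)) (𝓝[>] (0:ℝ))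
      ≤ ⨅ φ : E, ((I φ : EReal) + (F φ : EReal)) :=
  stmt_16_general F G0 L I V hub
end
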